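/- Let Γ be a finite irreducible simplicial graph with |VΓ| ≥ 3 and non-trivial vertex groups, and let v ∈ VΓ with link_Γ(v) non-empty. Then there exist a vertex u ∈ VΓ ∖ link_Γ(v) and a vertex w ∈ link_Γ(v) such that w ∉ link_Γ(u); in particular {u,v,w} spans a subgraph with exactly one edge {v,w}, so G_{{u,v,w}} ≅ (G_v × G_w) * G_u. -/

import Mathlib

open scoped commutatorElement

/-- The commutation relators defining a graph product: commutators of elements of
vertex groups joined by an edge of `Γ`. -/
def GraphProductRels {V : Type*} (Γ : SimpleGraph V) (G : V → Type*)
    [∀ v, Group (G v)] : Set (Monoid.CoprodI G) :=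
  {x | ∃ (u v : V) (a : G u) (b : G v), Γ.Adj u v ∧
    x = ⁅Monoid.CoprodI.of a, Monoid.CoprodI.of b⁆}

/-- The graph product of the groups `G v` over the simplicial graph `Γ`: the quotient
of the free product by the normal closure of the edge commutation relators. -/
abbrev GraphProduct {V : Type*} (Γ : SimpleGraph V) (G : V → Type*)
    [∀ v, Group (G v)] : Type _ :=
  Monoid.CoprodI G ⧸ Subgroup.normalClosure (GraphProductRels Γ G)

/-- The canonical map from a vertex group to the graph product. -/
def GraphProduct.of {V : Type*} {Γ : SimpleGraph V} {G : V → Type*}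
    [∀ v, Group (G v)] {v : V} : G v →* GraphProduct Γ G :=
  (QuotientGroup.mk' _).comp Monoid.CoprodI.of

/-- The special subgroup of a graph product corresponding to a subset `A` of vertices. -/
def GraphProduct.special {V : Type*} (Γ : SimpleGraph V) (G : V → Type*)
    [∀ v, Group (G v)] (A : Set V) : Subgroup (GraphProduct Γ G) :=
  Subgroup.closure (⋃ v ∈ A, Set.range (GraphProduct.of (Γ := Γ) (v := v)))

/-- A simplicial graph is irreducible if its vertex set admits no partition into two
non-empty sets `A`, `B` such that every vertex of `A` is adjacent to every vertex
of `B`. -/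
def SimpleGraph.Irreducible {V : Type*} (Γ : SimpleGraph V) : Prop :=
  ¬∃ A B : Set V, A.Nonempty ∧ B.Nonempty ∧ A ∪ B = Set.univ ∧ A ∩ B = ∅ ∧
    ∀ a ∈ A, ∀ b ∈ B, Γ.Adj a b

/-! Irreducibility, applied to the partition of the vertices into `link(v)` and its complement
(which contains `v`), yields `w ∈ link(v)` and `u ∉ link(v)` that are not adjacent.

For such a triple, the universal property of the graph product gives a homomorphism onto
`(G_v × G_w) * G_u`: `G_u` goes to the right factor and every other vertex group `G_x` to the
left one through `G_x ⊆ ∏ G ↠ G_v × G_w`. The commutation relators are respected because the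
neighbours of `u` are sent to `1`. This homomorphism is a left inverse of the obvious map
`(G_v × G_w) * G_u → G_{u,v,w}`, and that map is onto. -/

namespace GraphProduct

variable {V : Type*} {Γ : SimpleGraph V} {G : V → Type*} [∀ v, Group (G v)]

theorem of_commute {p q : V} (h : Γ.Adj p q) (a : G p) (b : G q) :
    Commute (of (Γ := Γ) a) (of (Γ := Γ) b) := by
  rw [← commutatorElement_eq_one_iff_commute]
  simp only [of, MonoidHom.coe_comp, Function.comp_apply]
  rw [← map_commutatorElement, QuotientGroup.mk'_apply, QuotientGroup.eq_one_iff]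
  exact Subgroup.subset_normalClosure ⟨p, q, a, b, h, rfl⟩

section lift

variable {H : Type*} [Group H] (f : ∀ p, G p →* H)
  (hf : ∀ p q, Γ.Adj p q → ∀ (a : G p) (b : G q), Commute (f p a) (f q b))

def lift : GraphProduct Γ G →* H :=
  QuotientGroup.lift _ (Monoid.CoprodI.lift f) <| Subgroup.normalClosure_le_normal <| by
    rintro _ ⟨p, q, a, b, hpq, rfl⟩
    simp only [SetLike.mem_coe, MonoidHom.mem_ker, map_commutatorElement,
      Monoid.CoprodI.lift_of, commutatorElement_eq_one_iff_commute]
    exact hf p q hpq a b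

@[simp]
theorem lift_of {p : V} (a : G p) : lift f hf (of a) = f p a :=
  Monoid.CoprodI.lift_of f a

end lift

theorem special_eq_iSup_range (A : Set V) :
    special Γ G A = ⨆ p ∈ A, (of (Γ := Γ) (v := p)).range := by
  simp only [special, Subgroup.closure_iUnion, ← MonoidHom.coe_range, Subgroup.closure_eq]

theorem special_triple (u v w : V) :
    special Γ G {u, v, w} =
      (of (Γ := Γ) (v := u)).range ⊔ ((of (v := v)).range ⊔ (of (v := w)).range) := by
  simp only [special_eq_iSup_range, iSup_insert, iSup_singleton]

section OneEdgeTriple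

variable {u v w : V}

def ofProdCoprod (hvw : Γ.Adj v w) : Monoid.Coprod (G v × G w) (G u) →* GraphProduct Γ G :=
  Monoid.Coprod.lift ((of (v := v)).noncommCoprod of (of_commute hvw)) of

theorem range_ofProdCoprod (hvw : Γ.Adj v w) :
    (ofProdCoprod (u := u) hvw).range = special Γ G {u, v, w} := by
  rw [Monoid.Coprod.range_eq, ofProdCoprod, Monoid.Coprod.lift_comp_inl,
    Monoid.Coprod.lift_comp_inr, MonoidHom.noncommCoprod_range, special_triple, sup_comm]

variable [DecidableEq V]

def toProdCoprodFamily (u v w x : V) : G x →* Monoid.Coprod (G v × G w) (G u) :=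
  if x = u then Monoid.Coprod.inr.comp ((Pi.evalMonoidHom G u).comp (MonoidHom.mulSingle G x))
  else Monoid.Coprod.inl.comp
    (((Pi.evalMonoidHom G v).prod (Pi.evalMonoidHom G w)).comp (MonoidHom.mulSingle G x))

theorem toProdCoprodFamily_self (a : G u) :
    toProdCoprodFamily u v w u a = Monoid.Coprod.inr a := by
  simp [toProdCoprodFamily]

theorem toProdCoprodFamily_of_ne {x : V} (hx : x ≠ u) (a : G x) :
    toProdCoprodFamily u v w x a =
      Monoid.Coprod.inl (Pi.mulSingle x a v, Pi.mulSingle x a w) := by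
  simp [toProdCoprodFamily, hx]

theorem toProdCoprodFamily_left (hvu : v ≠ u) (hvw : v ≠ w) (a : G v) :
    toProdCoprodFamily u v w v a = Monoid.Coprod.inl (a, 1) := by
  simp [toProdCoprodFamily_of_ne hvu, hvw.symm]

theorem toProdCoprodFamily_right (hwu : w ≠ u) (hvw : v ≠ w) (a : G w) :
    toProdCoprodFamily u v w w a = Monoid.Coprod.inl (1, a) := by
  simp [toProdCoprodFamily_of_ne hwu, hvw]

theorem toProdCoprodFamily_eq_one {x : V} (hu : x ≠ u) (hv : x ≠ v) (hw : x ≠ w) (a : G x) :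
    toProdCoprodFamily u v w x a = 1 := by
  rw [toProdCoprodFamily_of_ne hu, Pi.mulSingle_eq_of_ne hv.symm, Pi.mulSingle_eq_of_ne hw.symm,
    Prod.mk_one_one, map_one]

theorem toProdCoprodFamily_commute (hvu : ¬Γ.Adj v u) (huw : ¬Γ.Adj u w) (p q : V)
    (hpq : Γ.Adj p q) (a : G p) (b : G q) :
    Commute (toProdCoprodFamily u v w p a) (toProdCoprodFamily u v w q b) := by
  have eq_one {x y : V} (hxy : Γ.Adj x y) (hx : x = u) (c : G y) :
      toProdCoprodFamily u v w y c = 1 := by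
    subst hx
    exact toProdCoprodFamily_eq_one hxy.ne.symm (by rintro rfl; exact hvu hxy.symm)
      (by rintro rfl; exact huw hxy) c
  by_cases hp : p = u
  · rw [eq_one hpq hp]; exact Commute.one_right _
  by_cases hq : q = u
  · rw [eq_one hpq.symm hq]; exact Commute.one_left _
  rw [toProdCoprodFamily_of_ne hp, toProdCoprodFamily_of_ne hq]
  exact ((Pi.mulSingle_commute hpq.ne a b).map
    ((Pi.evalMonoidHom G v).prod (Pi.evalMonoidHom G w))).map Monoid.Coprod.inl

variable (hvw : Γ.Adj v w) (hvu : ¬Γ.Adj v u) (huw : ¬Γ.Adj u w)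

def toProdCoprod : GraphProduct Γ G →* Monoid.Coprod (G v × G w) (G u) :=
  lift (toProdCoprodFamily u v w) (toProdCoprodFamily_commute hvu huw)

theorem leftInverse_toProdCoprod_ofProdCoprod :
    Function.LeftInverse (toProdCoprod (G := G) hvu huw) (ofProdCoprod hvw) := by
  have hvu' : v ≠ u := by rintro rfl; exact huw hvw
  have hwu : w ≠ u := by rintro rfl; exact hvu hvw
  suffices (toProdCoprod hvu huw).comp (ofProdCoprod hvw) = MonoidHom.id _ from
    DFunLike.congr_fun this
  refine Monoid.Coprod.hom_ext (MonoidHom.ext fun ⟨a, b⟩ => ?_) (MonoidHom.ext fun c => ?_)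
  · show toProdCoprod hvu huw (ofProdCoprod (u := u) hvw (Monoid.Coprod.inl (a, b))) = _
    rw [ofProdCoprod, Monoid.Coprod.lift_apply_inl, MonoidHom.noncommCoprod_apply, map_mul,
      toProdCoprod, lift_of, lift_of, toProdCoprodFamily_left hvu' hvw.ne,
      toProdCoprodFamily_right hwu hvw.ne, ← map_mul, Prod.mk_mul_mk, mul_one, one_mul]
    rfl
  · simp [toProdCoprod, ofProdCoprod, toProdCoprodFamily_self]

noncomputable def specialTripleEquiv :
    special Γ G {u, v, w} ≃* Monoid.Coprod (G v × G w) (G u) :=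
  (MulEquiv.subgroupCongr (range_ofProdCoprod hvw).symm).trans
    (MonoidHom.ofLeftInverse (leftInverse_toProdCoprod_ofProdCoprod hvw hvu huw)).symm

end OneEdgeTriple

end GraphProduct

theorem SimpleGraph.Irreducible.exists_adj_not_adj {V : Type*} {Γ : SimpleGraph V}
    (hirr : Γ.Irreducible) {v : V} (hlink : (Γ.neighborSet v).Nonempty) :
    ∃ u w, Γ.Adj v w ∧ ¬Γ.Adj v u ∧ ¬Γ.Adj u w := by
  by_contra! h
  exact hirr ⟨Γ.neighborSet v, (Γ.neighborSet v)ᶜ, hlink, ⟨v, Γ.loopless.irrefl v⟩,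
    Set.union_compl_self _, Set.inter_compl_self _, fun w hw u hu => (h u w hw hu).symm⟩

theorem graphProduct_one_edge_triple_general {V : Type*} (Γ : SimpleGraph V)
    (G : V → Type*) [∀ v, Group (G v)]
    (hirr : Γ.Irreducible)
    (v : V) (hlink : (Γ.neighborSet v).Nonempty) :
    ∃ u w : V, u ∉ Γ.neighborSet v ∧ w ∈ Γ.neighborSet v ∧ w ∉ Γ.neighborSet u ∧
      u ≠ v ∧ u ≠ w ∧ v ≠ w ∧ Γ.Adj v w ∧ ¬Γ.Adj v u ∧ ¬Γ.Adj u w ∧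
      Nonempty (GraphProduct.special Γ G {u, v, w} ≃*
        Monoid.Coprod (G v × G w) (G u)) := by
  classical
  obtain ⟨u, w, hvw, hvu, huw⟩ := hirr.exists_adj_not_adj hlink
  have huv : u ≠ v := by rintro rfl; exact huw hvw
  have huw' : u ≠ w := by rintro rfl; exact hvu hvw
  exact ⟨u, w, hvu, hvw, huw, huv, huw', hvw.ne, hvw, hvu, huw,
    ⟨GraphProduct.specialTripleEquiv hvw hvu huw⟩⟩

/-- In a finite irreducible graph with at least 3 vertices and
non-trivial vertex groups, for any vertex `v` with non-empty link there are vertices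
`u ∉ link(v)` and `w ∈ link(v)` with `w ∉ link(u)`; the set `{u, v, w}` spans exactly
one edge `{v, w}` and `G_{u,v,w} ≅ (G_v × G_w) * G_u`. -/
theorem graphProduct_one_edge_triple {V : Type*} [Fintype V] (Γ : SimpleGraph V)
    (G : V → Type*) [∀ v, Group (G v)] [∀ v, Nontrivial (G v)]
    (hirr : Γ.Irreducible) (hcard : 3 ≤ Fintype.card V)
    (v : V) (hlink : (Γ.neighborSet v).Nonempty) :
    ∃ u w : V, u ∉ Γ.neighborSet v ∧ w ∈ Γ.neighborSet v ∧ w ∉ Γ.neighborSet u ∧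
      u ≠ v ∧ u ≠ w ∧ v ≠ w ∧ Γ.Adj v w ∧ ¬Γ.Adj v u ∧ ¬Γ.Adj u w ∧
      Nonempty (GraphProduct.special Γ G {u, v, w} ≃*
        Monoid.Coprod (G v × G w) (G u)) :=
  graphProduct_one_edge_triple_general Γ G hirr v hlink
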